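/- Let L > 0. Then there exists a constant C > 0, depending only on L, such that for every three times continuously differentiable function u : [0,L] → ℝ, sup_{x ∈ [0,L]} |u'(x)| ≤ C [ (∫₀^L u(x)² dx)^{1/4} · (∫₀^L u'''(x)² dx)^{1/4} + (∫₀^L u(x)² dx)^{1/2} ]. -/

import Mathlib

open Set MeasureTheory Filter Topology Real

/-!
On a subinterval of length `ℓ` containing `x`, write `u'(x) = ∫ k u - ∫ k (u - P)`, where `P` is
the second-order Taylor polynomial of `u` at `x` and the kernel `k`, of size `ℓ⁻²`, reproduces
the derivative at `x` of quadratic polynomials. The Taylor remainder is at most `ℓ² ∫ |u'''|`, so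
Cauchy–Schwarz gives `|u'(x)| ≲ ℓ^(-3/2) ‖u‖₂ + ℓ^(3/2) ‖u'''‖₂`. Taking `ℓ³ = ‖u‖₂ / ‖u'''‖₂`
when this is at most `L³`, and `ℓ = L` otherwise, balances the two terms.
-/

theorem integral_abs_le_sqrt_mul_sqrt_integral_sq {f : ℝ → ℝ} {a b : ℝ} (hab : a ≤ b)
    (hf : ContinuousOn f (Icc a b)) :
    ∫ y in a..b, |f y| ≤ √(b - a) * √(∫ y in a..b, f y ^ 2) := by
  have hmem : ∀ g : ℝ → ℝ, ContinuousOn g (Icc a b) →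
      MemLp g (ENNReal.ofReal 2) (volume.restrict (Ioc a b)) := by
    intro g hg
    obtain ⟨C, hC⟩ := isCompact_Icc.exists_bound_of_continuousOn hg
    refine MemLp.of_bound ((hg.mono Ioc_subset_Icc_self).aestronglyMeasurable measurableSet_Ioc)
      C ((ae_restrict_iff' measurableSet_Ioc).2 (Eventually.of_forall fun y hy => ?_))
    exact hC y (Ioc_subset_Icc_self hy)
  have hHolder := integral_mul_le_Lp_mul_Lq_of_nonneg (μ := volume.restrict (Ioc a b))
    Real.HolderConjugate.two_two (f := fun y => |f y|) (g := 1)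
    (Eventually.of_forall fun y => abs_nonneg _) (Eventually.of_forall fun y => zero_le_one)
    (hmem _ hf.abs) (hmem _ continuousOn_const)
  simp only [Pi.one_apply, mul_one, one_rpow, MeasureTheory.integral_const, smul_eq_mul]
    at hHolder
  rw [intervalIntegral.integral_of_le hab, intervalIntegral.integral_of_le hab, mul_comm,
    sqrt_eq_rpow, sqrt_eq_rpow]
  convert hHolder using 3
  · simp
  · simp [hab]

theorem integral_abs_le_sqrt_mul_sqrt_integral_sq_of_le {f : ℝ → ℝ} {a b c d : ℝ}
    (hac : a ≤ c) (hcd : c ≤ d) (hdb : d ≤ b) (hf : ContinuousOn f (Icc a b)) :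
    ∫ y in c..d, |f y| ≤ √(d - c) * √(∫ y in a..b, f y ^ 2) := by
  have hsub : Icc c d ⊆ Icc a b := Icc_subset_Icc hac hdb
  refine (integral_abs_le_sqrt_mul_sqrt_integral_sq hcd (hf.mono hsub)).trans ?_
  gcongr
  exact intervalIntegral.integral_mono_interval hac hcd hdb
    (Eventually.of_forall fun y => sq_nonneg _)
    ((hf.pow 2).intervalIntegrable_of_Icc (hac.trans (hcd.trans hdb)))

theorem abs_integral_mul_le_of_abs_le {k f : ℝ → ℝ} {a b C : ℝ} (hab : a ≤ b)
    (hk : ContinuousOn k (Icc a b)) (hf : ContinuousOn f (Icc a b))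
    (hC : ∀ y ∈ Icc a b, |k y| ≤ C) :
    |∫ y in a..b, k y * f y| ≤ C * ∫ y in a..b, |f y| := by
  rw [← intervalIntegral.integral_const_mul]
  refine (intervalIntegral.abs_integral_le_integral_abs hab).trans ?_
  refine intervalIntegral.integral_mono_on hab ((hk.mul hf).abs.intervalIntegrable_of_Icc hab)
    ((hf.abs.const_smul C).intervalIntegrable_of_Icc hab) fun y hy => ?_
  rw [abs_mul]
  exact mul_le_mul_of_nonneg_right (hC y hy) (abs_nonneg _)

theorem abs_sub_le_integral_abs_of_hasDerivWithinAt {f f' : ℝ → ℝ} {a b x y : ℝ}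
    (hf : ∀ t ∈ Icc a b, HasDerivWithinAt f (f' t) (Icc a b) t)
    (hf' : ContinuousOn f' (Icc a b)) (hx : x ∈ Icc a b) (hy : y ∈ Icc a b) :
    |f y - f x| ≤ ∫ t in a..b, |f' t| := by
  wlog hxy : x ≤ y generalizing x y
  · rw [abs_sub_comm]; exact this hy hx (le_of_not_ge hxy)
  have hsub : Icc x y ⊆ Icc a b := Icc_subset_Icc hx.1 hy.2
  have hftc : ∫ t in x..y, f' t = f y - f x := by
    refine intervalIntegral.integral_eq_sub_of_hasDeriv_right_of_le hxy
      (fun t ht => (hf t (hsub ht)).continuousWithinAt.mono hsub) (fun t ht => ?_)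
      ((hf'.mono hsub).intervalIntegrable_of_Icc hxy)
    have ht : t ∈ Ioo a b := ⟨hx.1.trans_lt ht.1, ht.2.trans_le hy.2⟩
    exact ((hf t (Ioo_subset_Icc_self ht)).hasDerivAt (Icc_mem_nhds ht.1 ht.2)).hasDerivWithinAt
  rw [← hftc]
  refine (intervalIntegral.abs_integral_le_integral_abs hxy).trans ?_
  exact intervalIntegral.integral_mono_interval hx.1 hxy hy.2
    (Eventually.of_forall fun t => abs_nonneg _)
    (hf'.abs.intervalIntegrable_of_Icc (hx.1.trans hx.2))

theorem abs_sub_taylor_two_le {u u' u'' : ℝ → ℝ} {a b x y M : ℝ}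
    (hu : ∀ t ∈ Icc a b, HasDerivWithinAt u (u' t) (Icc a b) t)
    (hu' : ∀ t ∈ Icc a b, HasDerivWithinAt u' (u'' t) (Icc a b) t)
    (hM : ∀ t ∈ Icc a b, |u'' t - u'' x| ≤ M) (hx : x ∈ Icc a b) (hy : y ∈ Icc a b) :
    |u y - (u x + u' x * (y - x) + u'' x / 2 * (y - x) ^ 2)| ≤ M * (b - a) ^ 2 := by
  have hdist : ∀ t ∈ Icc a b, ‖t - x‖ ≤ b - a := fun t ht =>
    abs_sub_le_iff.2 ⟨by linarith [ht.2, hx.1], by linarith [ht.1, hx.2]⟩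
  have hM0 : 0 ≤ M := (abs_nonneg _).trans (hM x hx)
  have hfirst : ∀ t ∈ Icc a b, |u' t - (u' x + u'' x * (t - x))| ≤ M * (b - a) := by
    intro t ht
    have hderiv : ∀ r ∈ Icc a b, HasDerivWithinAt (fun r => u' r - (u' x + u'' x * (r - x)))
        (u'' r - u'' x) (Icc a b) r := fun r hr =>
      (hu' r hr).sub (((hasDerivWithinAt_id r _).sub_const x).const_mul (u'' x)
        |>.const_add (u' x) |>.congr_deriv (mul_one _))
    have := (convex_Icc a b).norm_image_sub_le_of_norm_hasDerivWithin_le hderiv hM hx ht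
    simp only [sub_self, mul_zero, add_zero, sub_zero, Real.norm_eq_abs] at this
    exact this.trans (mul_le_mul_of_nonneg_left (hdist t ht) hM0)
  have hderiv : ∀ r ∈ Icc a b,
      HasDerivWithinAt (fun r => u r - (u x + u' x * (r - x) + u'' x / 2 * (r - x) ^ 2))
        (u' r - (u' x + u'' x * (r - x))) (Icc a b) r := by
    intro r hr
    have hlin := ((hasDerivWithinAt_id r (Icc a b)).sub_const x)
    refine (hu r hr).sub ((((hlin.const_mul (u' x)).const_add (u x)).add
      ((hlin.pow 2).const_mul (u'' x / 2))).congr_deriv ?_)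
    simp only [id]; ring
  have := (convex_Icc a b).norm_image_sub_le_of_norm_hasDerivWithin_le hderiv hfirst hx hy
  simp only [sub_self, mul_zero, add_zero, sub_zero, ne_eq, OfNat.ofNat_ne_zero,
    not_false_eq_true, zero_pow, Real.norm_eq_abs] at this
  calc _ ≤ M * (b - a) * |y - x| := this
    _ ≤ M * (b - a) * (b - a) :=
      mul_le_mul_of_nonneg_left (hdist y hy) (mul_nonneg hM0 (by linarith [hy.1, hy.2]))
    _ = M * (b - a) ^ 2 := by ring

/-- The Riesz representer in `L²(0, 1)` of `p ↦ p' s` on polynomials of degree at most two. -/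
def quadDerivKernel (s t : ℝ) : ℝ :=
  60 * s - 36 + (192 - 360 * s) * t + (360 * s - 180) * t ^ 2

theorem integral_unitInterval_quartic (d0 d1 d2 d3 d4 : ℝ) :
    ∫ t in (0:ℝ)..1, (d0 + d1 * t + d2 * t ^ 2 + d3 * t ^ 3 + d4 * t ^ 4)
      = d0 + d1 / 2 + d2 / 3 + d3 / 4 + d4 / 5 := by
  simp (disch := apply Continuous.intervalIntegrable; fun_prop) only [intervalIntegral.integral_add]
  rw [intervalIntegral.integral_const_mul]
  simp
  ring

theorem integral_quadDerivKernel_mul (s c0 c1 c2 : ℝ) :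
    ∫ t in (0:ℝ)..1, quadDerivKernel s t * (c0 + c1 * t + c2 * t ^ 2) = c1 + 2 * c2 * s := by
  have hexpand : ∀ t, quadDerivKernel s t * (c0 + c1 * t + c2 * t ^ 2) =
      (60 * s - 36) * c0 + ((60 * s - 36) * c1 + (192 - 360 * s) * c0) * t
        + ((60 * s - 36) * c2 + (192 - 360 * s) * c1 + (360 * s - 180) * c0) * t ^ 2
        + ((192 - 360 * s) * c2 + (360 * s - 180) * c1) * t ^ 3 + (360 * s - 180) * c2 * t ^ 4 :=
    fun t => by rw [quadDerivKernel]; ring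
  simp only [hexpand, integral_unitInterval_quartic]
  ring

theorem abs_quadDerivKernel_le {s t : ℝ} (hs : s ∈ Icc (0:ℝ) 1) (ht : t ∈ Icc (0:ℝ) 1) :
    |quadDerivKernel s t| ≤ 36 := by
  obtain ⟨hs0, hs1⟩ := hs
  obtain ⟨ht0, ht1⟩ := ht
  have h0 : |quadDerivKernel 0 t| ≤ 36 := by
    rw [abs_le, quadDerivKernel]; constructor <;> nlinarith
  have h1 : |quadDerivKernel 1 t| ≤ 36 := by
    rw [abs_le, quadDerivKernel]; constructor <;> nlinarith
  have haff : quadDerivKernel s t = (1 - s) * quadDerivKernel 0 t + s * quadDerivKernel 1 t := by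
    simp only [quadDerivKernel]; ring
  rw [haff]
  calc _ ≤ (1 - s) * |quadDerivKernel 0 t| + s * |quadDerivKernel 1 t| := by
        refine (abs_add_le _ _).trans_eq ?_
        rw [abs_mul, abs_mul, abs_of_nonneg (by linarith), abs_of_nonneg hs0]
    _ ≤ (1 - s) * 36 + s * 36 := by gcongr
    _ = 36 := by ring

theorem integral_quadDerivKernel_rescale_mul {a b x : ℝ} (hab : a < b) (p0 p1 p2 : ℝ) :
    ∫ y in a..b, quadDerivKernel ((x - a) / (b - a)) ((y - a) / (b - a)) / (b - a) ^ 2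
        * (p0 + p1 * (y - x) + p2 * (y - x) ^ 2) = p1 := by
  set ℓ := b - a
  have hℓ0 : ℓ ≠ 0 := (sub_pos.2 hab).ne'
  set s := (x - a) / ℓ
  have hx : x = ℓ * s + a := by simp only [s]; field_simp; ring
  have hsubst := intervalIntegral.integral_comp_mul_add (a := 0) (b := 1)
    (fun y => quadDerivKernel s ((y - a) / ℓ) / ℓ ^ 2 * (p0 + p1 * (y - x) + p2 * (y - x) ^ 2))
    hℓ0 a
  simp only [mul_zero, zero_add, mul_one, add_sub_cancel_right, mul_div_cancel_left₀ _ hℓ0,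
    smul_eq_mul] at hsubst
  rw [show ℓ + a = b by simp [ℓ]] at hsubst
  rw [eq_inv_mul_iff_mul_eq₀ hℓ0] at hsubst
  rw [← hsubst]
  have hpoly : ∀ t, quadDerivKernel s t / ℓ ^ 2
        * (p0 + p1 * (ℓ * t + a - x) + p2 * (ℓ * t + a - x) ^ 2)
      = ℓ⁻¹ ^ 2 * (quadDerivKernel s t * ((p0 - p1 * ℓ * s + p2 * ℓ ^ 2 * s ^ 2)
        + (p1 * ℓ - 2 * p2 * ℓ ^ 2 * s) * t + p2 * ℓ ^ 2 * t ^ 2)) := by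
    intro t; rw [hx]; field_simp; ring
  simp only [hpoly, intervalIntegral.integral_const_mul, integral_quadDerivKernel_mul]
  field_simp
  ring

theorem abs_deriv_le_integral_abs {u u' u'' u''' : ℝ → ℝ} {a b x : ℝ} (hab : a < b)
    (hu : ∀ t ∈ Icc a b, HasDerivWithinAt u (u' t) (Icc a b) t)
    (hu' : ∀ t ∈ Icc a b, HasDerivWithinAt u' (u'' t) (Icc a b) t)
    (hu'' : ∀ t ∈ Icc a b, HasDerivWithinAt u'' (u''' t) (Icc a b) t)
    (hu''' : ContinuousOn u''' (Icc a b)) (hx : x ∈ Icc a b) :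
    |u' x| ≤ 36 * ((∫ y in a..b, |u y|) / (b - a) ^ 2 + (b - a) * ∫ y in a..b, |u''' y|) := by
  have hℓ : 0 < b - a := sub_pos.2 hab
  set k := fun y => quadDerivKernel ((x - a) / (b - a)) ((y - a) / (b - a)) / (b - a) ^ 2
  set P := fun y => u x + u' x * (y - x) + u'' x / 2 * (y - x) ^ 2
  have hunit : ∀ y ∈ Icc a b, (y - a) / (b - a) ∈ Icc (0:ℝ) 1 := fun y hy =>
    ⟨div_nonneg (by linarith [hy.1]) hℓ.le, (div_le_one hℓ).2 (by linarith [hy.2])⟩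
  have hk : Continuous k := by simp only [k, quadDerivKernel]; fun_prop
  have hk_le : ∀ y ∈ Icc a b, |k y| ≤ 36 / (b - a) ^ 2 := fun y hy => by
    rw [abs_div, abs_of_pos (pow_pos hℓ 2)]
    exact div_le_div_of_nonneg_right (abs_quadDerivKernel_le (hunit x hx) (hunit y hy))
      (pow_pos hℓ 2).le
  have hu_cont : ContinuousOn u (Icc a b) := fun t ht => (hu t ht).continuousWithinAt
  have hsplit : u' x = (∫ y in a..b, k y * u y) - ∫ y in a..b, k y * (u y - P y) := by
    simp only [mul_sub]
    rw [intervalIntegral.integral_sub (f := fun y => k y * u y) (g := fun y => k y * P y)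
      ((hk.continuousOn.mul hu_cont).intervalIntegrable_of_Icc hab.le)
      (by apply Continuous.intervalIntegrable; fun_prop), sub_sub_cancel]
    exact (integral_quadDerivKernel_rescale_mul hab _ _ _).symm
  set M := ∫ t in a..b, |u''' t|
  have hR : ∀ y ∈ Icc a b, |u y - P y| ≤ M * (b - a) ^ 2 := fun y hy =>
    abs_sub_taylor_two_le hu hu'
      (fun t ht => abs_sub_le_integral_abs_of_hasDerivWithinAt hu'' hu''' hx ht) hx hy
  have hR_int :
      |∫ y in a..b, k y * (u y - P y)| ≤ 36 / (b - a) ^ 2 * (M * (b - a) ^ 2) * |b - a| := by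
    rw [← Real.norm_eq_abs]
    refine intervalIntegral.norm_integral_le_of_norm_le_const fun y hy => ?_
    have hy : y ∈ Icc a b := uIoc_subset_uIcc.trans (uIcc_of_le hab.le).subset hy
    rw [Real.norm_eq_abs, abs_mul]
    exact mul_le_mul (hk_le y hy) (hR y hy) (abs_nonneg _) (div_nonneg (by norm_num) (sq_nonneg _))
  calc |u' x| ≤ |∫ y in a..b, k y * u y| + |∫ y in a..b, k y * (u y - P y)| := by
        rw [hsplit]; exact abs_sub _ _
    _ ≤ 36 / (b - a) ^ 2 * (∫ y in a..b, |u y|)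
          + 36 / (b - a) ^ 2 * (M * (b - a) ^ 2) * |b - a| :=
        add_le_add (abs_integral_mul_le_of_abs_le hab.le hk.continuousOn hu_cont hk_le) hR_int
    _ = _ := by rw [abs_of_pos hℓ]; field_simp

theorem abs_deriv_le_sqrt_integral_sq {u u' u'' u''' : ℝ → ℝ} {a b x ℓ : ℝ} (hℓ : 0 < ℓ)
    (hℓab : ℓ ≤ b - a)
    (hu : ∀ t ∈ Icc a b, HasDerivWithinAt u (u' t) (Icc a b) t)
    (hu' : ∀ t ∈ Icc a b, HasDerivWithinAt u' (u'' t) (Icc a b) t)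
    (hu'' : ∀ t ∈ Icc a b, HasDerivWithinAt u'' (u''' t) (Icc a b) t)
    (hu''' : ContinuousOn u''' (Icc a b)) (hx : x ∈ Icc a b) :
    |u' x| ≤ 36 * (√(∫ y in a..b, u y ^ 2) / (ℓ * √ℓ)
      + ℓ * √ℓ * √(∫ y in a..b, u''' y ^ 2)) := by
  set c := min x (b - ℓ)
  have hac : a ≤ c := le_min hx.1 (by linarith)
  have hcb : c + ℓ ≤ b := by linarith [min_le_right x (b - ℓ)]
  have hsub : Icc c (c + ℓ) ⊆ Icc a b := Icc_subset_Icc hac hcb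
  have hxc : x ∈ Icc c (c + ℓ) := ⟨min_le_left _ _, by
    rcases le_total x (b - ℓ) with h | h
    · simp only [c, min_eq_left h]; linarith
    · simp only [c, min_eq_right h]; linarith [hx.2]⟩
  have hlocal := abs_deriv_le_integral_abs (by linarith : c < c + ℓ)
    (fun t ht => (hu t (hsub ht)).mono hsub) (fun t ht => (hu' t (hsub ht)).mono hsub)
    (fun t ht => (hu'' t (hsub ht)).mono hsub) (hu'''.mono hsub) hxc
  have hu_cont : ContinuousOn u (Icc a b) := fun t ht => (hu t ht).continuousWithinAt
  have hcℓ : c ≤ c + ℓ := by linarith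
  have h0 := integral_abs_le_sqrt_mul_sqrt_integral_sq_of_le hac hcℓ hcb hu_cont
  have h3 := integral_abs_le_sqrt_mul_sqrt_integral_sq_of_le hac hcℓ hcb hu'''
  rw [add_sub_cancel_left] at hlocal h0 h3
  refine hlocal.trans ?_
  calc 36 * ((∫ y in c..c + ℓ, |u y|) / ℓ ^ 2 + ℓ * ∫ y in c..c + ℓ, |u''' y|)
      ≤ 36 * (√ℓ * √(∫ y in a..b, u y ^ 2) / ℓ ^ 2
          + ℓ * (√ℓ * √(∫ y in a..b, u''' y ^ 2))) := by gcongr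
    _ = _ := by
      obtain ⟨r, hr, rfl⟩ : ∃ r, 0 < r ∧ ℓ = r ^ 2 :=
        ⟨√ℓ, sqrt_pos.2 hℓ, (sq_sqrt hℓ.le).symm⟩
      rw [sqrt_sq hr.le]
      field_simp

theorem le_of_forall_le_div_add_mul {t A B S c : ℝ} (hA : 0 ≤ A) (hS : 0 < S)
    (hc : 0 ≤ c) (h : ∀ s, 0 < s → s ≤ S → t ≤ c * (A / s + s * B)) :
    t ≤ 2 * c * (√A * √B + A / S) := by
  have hAB : 0 ≤ √A * √B := by positivity
  rcases le_or_gt (S ^ 2 * B) A with hSA | hAS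
  · have hSB : S * B ≤ A / S := by rw [le_div_iff₀ hS]; nlinarith
    calc t ≤ c * (A / S + S * B) := h S hS le_rfl
      _ ≤ c * (A / S + A / S) := by gcongr
      _ ≤ 2 * c * (√A * √B + A / S) := by nlinarith
  rcases hA.eq_or_lt with rfl | hA
  · have hlim : Tendsto (fun s => c * (0 / s + s * B)) (𝓝[>] 0) (𝓝 0) := by
      simp only [zero_div, zero_add]
      exact (((continuous_id.mul continuous_const).const_mul c).tendsto' 0 0 (by simp)).mono_left
        nhdsWithin_le_nhds
    have ht := ge_of_tendsto hlim (Filter.mem_of_superset (Ioo_mem_nhdsGT hS) fun s hs =>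
      h s hs.1 hs.2.le)
    simpa using ht
  have hB : 0 < B := by nlinarith
  have hs : 0 < √A / √B := div_pos (sqrt_pos.2 hA) (sqrt_pos.2 hB)
  have hsS : √A / √B ≤ S := by
    rw [div_le_iff₀ (sqrt_pos.2 hB), ← sqrt_sq hS.le, ← sqrt_mul (sq_nonneg S)]
    exact sqrt_le_sqrt hAS.le
  calc t ≤ c * (A / (√A / √B) + √A / √B * B) := h _ hs hsS
    _ = 2 * c * (√A * √B) := by
      rw [← sq_sqrt hA.le, ← sq_sqrt hB.le, sqrt_sq (sqrt_nonneg _), sqrt_sq (sqrt_nonneg _)]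
      field_simp
      ring
    _ ≤ 2 * c * (√A * √B + A / S) := by gcongr; exact le_add_of_nonneg_right (by positivity)

theorem exists_mul_sqrt_eq {s S : ℝ} (hs : 0 < s) (hsS : s ≤ S * √S) :
    ∃ ℓ, 0 < ℓ ∧ ℓ ≤ S ∧ ℓ * √ℓ = s := by
  have hcube : s ^ ((2:ℝ) / 3) * √(s ^ ((2:ℝ) / 3)) = s := by
    rw [sqrt_eq_rpow, ← rpow_mul hs.le, ← rpow_add hs]
    norm_num
  refine ⟨s ^ ((2:ℝ) / 3), rpow_pos_of_pos hs _, le_of_not_gt fun hSℓ => ?_, hcube⟩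
  have hS : 0 ≤ S := by
    by_contra! h
    exact (hs.trans_le hsS).not_ge (by nlinarith [sqrt_nonneg S])
  have := mul_lt_mul'' hSℓ (sqrt_lt_sqrt hS hSℓ) hS (sqrt_nonneg S)
  linarith

theorem sqrt_sqrt_eq_rpow {x : ℝ} (hx : 0 ≤ x) : √(√x) = x ^ ((1:ℝ) / 4) := by
  rw [sqrt_eq_rpow, sqrt_eq_rpow, ← rpow_mul hx]
  norm_num

/-- One-dimensional Gagliardo–Nirenberg interpolation on `[0,L]`:
`‖u'‖_∞ ≤ C (‖u‖₂^{1/2} ‖u'''‖₂^{1/2} + ‖u‖₂)`. -/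
theorem gagliardo_nirenberg_sup_deriv
    (L : ℝ) (hL : 0 < L) :
    ∃ C : ℝ, 0 < C ∧
      ∀ u u' u'' u''' : ℝ → ℝ,
        (∀ x ∈ Icc (0:ℝ) L, HasDerivWithinAt u (u' x) (Icc (0:ℝ) L) x) →
        (∀ x ∈ Icc (0:ℝ) L, HasDerivWithinAt u' (u'' x) (Icc (0:ℝ) L) x) →
        (∀ x ∈ Icc (0:ℝ) L, HasDerivWithinAt u'' (u''' x) (Icc (0:ℝ) L) x) →
        ContinuousOn u''' (Icc (0:ℝ) L) →
        ∀ x ∈ Icc (0:ℝ) L,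
          |u' x| ≤ C * ((∫ y in (0:ℝ)..L, (u y) ^ 2) ^ ((1:ℝ) / 4)
                          * (∫ y in (0:ℝ)..L, (u''' y) ^ 2) ^ ((1:ℝ) / 4)
                        + (∫ y in (0:ℝ)..L, (u y) ^ 2) ^ ((1:ℝ) / 2)) := by
  refine ⟨72 * (1 + 1 / (L * √L)), by positivity, ?_⟩
  intro u u' u'' u''' hu hu' hu'' hu''' x hx
  set I := ∫ y in (0:ℝ)..L, u y ^ 2
  set J := ∫ y in (0:ℝ)..L, u''' y ^ 2
  have hI : 0 ≤ I := intervalIntegral.integral_nonneg hL.le fun y _ => sq_nonneg _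
  have hJ : 0 ≤ J := intervalIntegral.integral_nonneg hL.le fun y _ => sq_nonneg _
  have hbound := le_of_forall_le_div_add_mul (sqrt_nonneg I)
    (by positivity : 0 < L * √L) (by norm_num : (0:ℝ) ≤ 36) fun s hs hsL => by
      obtain ⟨ℓ, hℓ, hℓL, rfl⟩ := exists_mul_sqrt_eq hs hsL
      exact abs_deriv_le_sqrt_integral_sq hℓ (by rwa [sub_zero]) hu hu' hu'' hu''' hx
  rw [sqrt_sqrt_eq_rpow hI, sqrt_sqrt_eq_rpow hJ, sqrt_eq_rpow] at hbound
  refine hbound.trans ?_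
  have hprod : 0 ≤ I ^ ((1:ℝ) / 4) * J ^ ((1:ℝ) / 4) := by positivity
  have hL' : 0 ≤ 1 / (L * √L) := by positivity
  rw [div_eq_mul_one_div (I ^ ((1:ℝ) / 2))]
  nlinarith [rpow_nonneg hI ((1:ℝ) / 2)]
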